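/- Let P be a finite multiset of nonzero vectors in ℝⁿ all lying in an open half-space {w : ⟨v,w⟩ > 0} for some v. Then the pushforward of Lebesgue measure on (ℝ_{≥0})^P under π : (x_λ) ↦ μ + Σ_λ x_λ λ is a locally finite (Radon) measure on ℝⁿ. -/

import Mathlib

open MeasureTheory Bornology Metric
open scoped RealInnerProductSpace

section ConeBounds

variable {E : Type*} [NormedAddCommGroup E] [InnerProductSpace ℝ E] {ι : Type*} [Fintype ι]
  {lam : ι → E} {v : E}

theorem mul_inner_le_inner_sum_smul (hv : ∀ i, 0 ≤ ⟪v, lam i⟫) {x : ι → ℝ}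
    (hx : ∀ i, 0 ≤ x i) (i : ι) : x i * ⟪v, lam i⟫ ≤ ⟪v, ∑ j, x j • lam j⟫ := by
  simp only [inner_sum, real_inner_smul_right]
  exact Finset.single_le_sum (f := fun j => x j * ⟪v, lam j⟫)
    (fun j _ => mul_nonneg (hx j) (hv j)) (Finset.mem_univ i)

/-- Pairing with `v` bounds every coordinate `x i` of a point of the orthant by
`⟪v, ∑ x j • lam j⟫ / ⟪v, lam i⟫ ≤ ‖v‖ * r / ⟪v, lam i⟫`. -/
theorem isBounded_preimage_inter_nonneg (hv : ∀ i, 0 < ⟪v, lam i⟫) (μ : E) {B : Set E}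
    (hB : IsBounded B) :
    IsBounded ((fun x : ι → ℝ => μ + ∑ i, x i • lam i) ⁻¹' B ∩ {x | ∀ i, 0 ≤ x i}) := by
  obtain ⟨r, hr⟩ := (isBounded_iff_subset_closedBall μ).1 hB
  refine (IsBounded.pi fun i => isBounded_Icc 0 (‖v‖ * r / ⟪v, lam i⟫)).subset ?_
  rintro x ⟨hxB, hx⟩ i -
  have hnorm : ‖∑ j, x j • lam j‖ ≤ r := by
    simpa [dist_eq_norm] using hr hxB
  refine ⟨hx i, (le_div_iff₀ (hv i)).2 ?_⟩
  calc x i * ⟪v, lam i⟫ ≤ ⟪v, ∑ j, x j • lam j⟫ :=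
        mul_inner_le_inner_sum_smul (fun j => (hv j).le) hx i
    _ ≤ ‖v‖ * ‖∑ j, x j • lam j‖ := real_inner_le_norm _ _
    _ ≤ ‖v‖ * r := by gcongr

end ConeBounds

theorem cone_measure_locally_finite_general {n : ℕ} {ι : Type*} [Fintype ι]
    (lam : ι → EuclideanSpace ℝ (Fin n))
    (v : EuclideanSpace ℝ (Fin n)) (hv : ∀ i, 0 < ⟪v, lam i⟫)
    (μ : EuclideanSpace ℝ (Fin n)) :
    IsLocallyFiniteMeasure
      (Measure.map (fun x : ι → ℝ => μ + ∑ i, x i • lam i)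
        (volume.restrict {x : ι → ℝ | ∀ i, 0 ≤ x i})) := by
  have hπ : Measurable (fun x : ι → ℝ => μ + ∑ i, x i • lam i) := by fun_prop
  suffices IsFiniteMeasureOnCompacts (Measure.map (fun x : ι → ℝ => μ + ∑ i, x i • lam i)
      (volume.restrict {x : ι → ℝ | ∀ i, 0 ≤ x i})) from inferInstance
  refine ⟨fun K hK => ?_⟩
  rw [Measure.map_apply hπ hK.measurableSet, Measure.restrict_apply (hπ hK.measurableSet)]
  exact (isBounded_preimage_inter_nonneg hv μ hK.isBounded).measure_lt_top

/-- If a finite family of nonzero vectors `λ i` in `ℝⁿ` all lie in the open half-space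
`{w : ⟪v,w⟫ > 0}`, then the pushforward of Lebesgue measure on `(ℝ_{≥0})^P` under
`π : (x_λ) ↦ μ + Σ_λ x_λ • λ` is a locally finite measure on `ℝⁿ`. -/
theorem cone_measure_locally_finite {n : ℕ} {ι : Type*} [Fintype ι]
    (lam : ι → EuclideanSpace ℝ (Fin n)) (hlam : ∀ i, lam i ≠ 0)
    (v : EuclideanSpace ℝ (Fin n)) (hv : ∀ i, 0 < ⟪v, lam i⟫)
    (μ : EuclideanSpace ℝ (Fin n)) :
    IsLocallyFiniteMeasure
      (Measure.map (fun x : ι → ℝ => μ + ∑ i, x i • lam i)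
        (volume.restrict {x : ι → ℝ | ∀ i, 0 ≤ x i})) :=
  cone_measure_locally_finite_general lam v hv μ
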